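/- Let A and B be unital algebras over a field K and let τ : B⊗A → A⊗B be a linear map. Define μ_τ = (μ_A⊗μ_B)(id_A⊗τ⊗id_B) on (A⊗B)⊗(A⊗B). Suppose τ(b⊗1) = 1⊗b and τ(1⊗a) = a⊗1 for all a ∈ A, b ∈ B, and τ∘(μ_B⊗μ_A) = μ_τ∘(τ⊗τ)∘(id_B⊗τ⊗id_A). Then μ_τ is associative with unit 1_A⊗1_B. -/
import Mathlib

open TensorProduct LinearMap

set_option maxHeartbeats 1000000
set_option synthInstance.maxHeartbeats 400000

noncomputable section

variable (K : Type) [Field K] (A B : Type) [Ring A] [Ring B] [Algebra K A] [Algebra K B]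

/-- Auxiliary map `B ⊗ (A ⊗ B) → A ⊗ (B ⊗ B)` applying `τ` to the first two factors. -/
def innerTau (τ : B ⊗[K] A →ₗ[K] A ⊗[K] B) :
    B ⊗[K] (A ⊗[K] B) →ₗ[K] A ⊗[K] (B ⊗[K] B) :=
  (TensorProduct.assoc K A B B).toLinearMap ∘ₗ rTensor B τ ∘ₗ
    (TensorProduct.assoc K B A B).symm.toLinearMap

/-- The twisted multiplication `μ_τ = (μ_A ⊗ μ_B)(id_A ⊗ τ ⊗ id_B)` on `A ⊗ B`. -/
def mulTau (τ : B ⊗[K] A →ₗ[K] A ⊗[K] B) :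
    (A ⊗[K] B) ⊗[K] (A ⊗[K] B) →ₗ[K] A ⊗[K] B :=
  TensorProduct.map (mul' K A) (mul' K B) ∘ₗ
    (TensorProduct.assoc K A A (B ⊗[K] B)).symm.toLinearMap ∘ₗ
    lTensor A (innerTau K A B τ) ∘ₗ
    (TensorProduct.assoc K A B (A ⊗[K] B)).toLinearMap

/-- The reassociation `(B ⊗ B) ⊗ (A ⊗ A) → (B ⊗ A) ⊗ (B ⊗ A)` applying `τ` in the middle,
i.e. `id_B ⊗ τ ⊗ id_A` up to associators. -/
def midTau (τ : B ⊗[K] A →ₗ[K] A ⊗[K] B) :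
    (B ⊗[K] B) ⊗[K] (A ⊗[K] A) →ₗ[K] (B ⊗[K] A) ⊗[K] (B ⊗[K] A) :=
  (TensorProduct.assoc K B A (B ⊗[K] A)).symm.toLinearMap ∘ₗ
    lTensor B ((TensorProduct.assoc K A B A).toLinearMap ∘ₗ rTensor A τ ∘ₗ
      (TensorProduct.assoc K B A A).symm.toLinearMap) ∘ₗ
    (TensorProduct.assoc K B B (A ⊗[K] A)).toLinearMap

/-- Evaluation of `μ_τ` on simple tensors. -/
theorem mulTau_tmul_eq (τ : B ⊗[K] A →ₗ[K] A ⊗[K] B) (a : A) (b : B) (c : A) (d : B) :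
    mulTau K A B τ ((a ⊗ₜ[K] b) ⊗ₜ[K] (c ⊗ₜ[K] d)) =
      TensorProduct.map (mulLeft K a) (mulRight K d) (τ (b ⊗ₜ[K] c)) := by
  simp only [mulTau, innerTau, coe_comp, Function.comp_apply, LinearEquiv.coe_coe,
    assoc_tmul, assoc_symm_tmul, lTensor_tmul, rTensor_tmul]
  generalize τ (b ⊗ₜ[K] c) = t
  induction t using TensorProduct.induction_on with
  | zero => simp
  | tmul u v => simp [mul'_apply, mulLeft_apply, mulRight_apply]
  | add x y hx hy =>
    simp only [add_tmul, tmul_add, map_add] at hx hy ⊢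
    rw [hx, hy]

theorem map_map_apply' {M N P Q R S : Type} [AddCommMonoid M] [AddCommMonoid N]
    [AddCommMonoid P] [AddCommMonoid Q] [AddCommMonoid R] [AddCommMonoid S]
    [Module K M] [Module K N] [Module K P] [Module K Q] [Module K R] [Module K S]
    (f : N →ₗ[K] P) (f' : M →ₗ[K] N) (g : R →ₗ[K] S) (g' : Q →ₗ[K] R) (t : M ⊗[K] Q) :
    TensorProduct.map f g (TensorProduct.map f' g' t) =
      TensorProduct.map (f ∘ₗ f') (g ∘ₗ g') t := by
  rw [TensorProduct.map_comp]; rfl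

theorem mulTau_one_right (τ : B ⊗[K] A →ₗ[K] A ⊗[K] B)
    (hu1 : ∀ b : B, τ (b ⊗ₜ[K] (1 : A)) = (1 : A) ⊗ₜ[K] b)
    (x : A ⊗[K] B) (v : B) :
    mulTau K A B τ (x ⊗ₜ[K] ((1 : A) ⊗ₜ[K] v)) =
      TensorProduct.map LinearMap.id (mulRight K v) x := by
  induction x using TensorProduct.induction_on with
  | zero => simp
  | tmul c d => simp [mulTau_tmul_eq, hu1, mulLeft_apply, mulRight_apply]
  | add x y hx hy => simp only [add_tmul, map_add, hx, hy]

theorem mulTau_one_left (τ : B ⊗[K] A →ₗ[K] A ⊗[K] B)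
    (hu2 : ∀ a : A, τ ((1 : B) ⊗ₜ[K] a) = a ⊗ₜ[K] (1 : B))
    (y : A ⊗[K] B) (u : A) :
    mulTau K A B τ ((u ⊗ₜ[K] (1 : B)) ⊗ₜ[K] y) =
      TensorProduct.map (mulLeft K u) LinearMap.id y := by
  induction y using TensorProduct.induction_on with
  | zero => simp
  | tmul c d => simp [mulTau_tmul_eq, hu2, mulLeft_apply, mulRight_apply]
  | add x y hx hy => simp only [tmul_add, map_add, hx, hy]

theorem mulTau_mapL (τ : B ⊗[K] A →ₗ[K] A ⊗[K] B) (a : A) (x z : A ⊗[K] B) :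
    mulTau K A B τ ((TensorProduct.map (mulLeft K a) LinearMap.id x) ⊗ₜ[K] z) =
      TensorProduct.map (mulLeft K a) LinearMap.id (mulTau K A B τ (x ⊗ₜ[K] z)) := by
  induction x using TensorProduct.induction_on with
  | zero => simp
  | tmul u v =>
    induction z using TensorProduct.induction_on with
    | zero => simp
    | tmul p q =>
      simp only [map_tmul, id_coe, id_eq, mulLeft_apply, mulTau_tmul_eq, map_map_apply',
        mulLeft_mul, comp_id, id_comp]
    | add z1 z2 h1 h2 => simp only [tmul_add, map_add, h1, h2]
  | add x y hx hy => simp only [map_add, add_tmul, hx, hy]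

theorem mulTau_mapR (τ : B ⊗[K] A →ₗ[K] A ⊗[K] B) (f : B) (x z : A ⊗[K] B) :
    mulTau K A B τ (x ⊗ₜ[K] (TensorProduct.map LinearMap.id (mulRight K f) z)) =
      TensorProduct.map LinearMap.id (mulRight K f) (mulTau K A B τ (x ⊗ₜ[K] z)) := by
  induction x using TensorProduct.induction_on with
  | zero => simp
  | tmul u v =>
    induction z using TensorProduct.induction_on with
    | zero => simp
    | tmul p q =>
      simp only [map_tmul, id_coe, id_eq, mulRight_apply, mulTau_tmul_eq, map_map_apply',
        mulRight_mul, comp_id, id_comp]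
    | add z1 z2 h1 h2 => simp only [tmul_add, map_add, h1, h2]
  | add x y hx hy => simp only [map_add, add_tmul, hx, hy]

theorem cor1 (τ : B ⊗[K] A →ₗ[K] A ⊗[K] B)
    (hu1 : ∀ b : B, τ (b ⊗ₜ[K] (1 : A)) = (1 : A) ⊗ₜ[K] b)
    (hcomp : τ ∘ₗ TensorProduct.map (mul' K B) (mul' K A) =
      mulTau K A B τ ∘ₗ TensorProduct.map τ τ ∘ₗ midTau K A B τ)
    (w b : B) (a : A) :
    τ ((w * b) ⊗ₜ[K] a) = mulTau K A B τ (((1 : A) ⊗ₜ[K] w) ⊗ₜ[K] τ (b ⊗ₜ[K] a)) := by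
  have h := LinearMap.congr_fun hcomp ((w ⊗ₜ[K] b) ⊗ₜ[K] (a ⊗ₜ[K] (1 : A)))
  simp only [coe_comp, Function.comp_apply, map_tmul, mul'_apply, mul_one, midTau,
    LinearEquiv.coe_coe, assoc_tmul, assoc_symm_tmul, lTensor_tmul, rTensor_tmul] at h
  rw [h]
  generalize τ (b ⊗ₜ[K] a) = t
  induction t using TensorProduct.induction_on with
  | zero => simp
  | tmul u v =>
    simp only [assoc_tmul, assoc_symm_tmul, map_tmul, hu1,
      mulTau_one_right K A B τ hu1, mulTau_tmul_eq, mulLeft_one]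
  | add x y hx hy =>
    simp only [add_tmul, tmul_add, map_add] at hx hy ⊢
    rw [hx, hy]

theorem cor2 (τ : B ⊗[K] A →ₗ[K] A ⊗[K] B)
    (hu2 : ∀ a : A, τ ((1 : B) ⊗ₜ[K] a) = a ⊗ₜ[K] (1 : B))
    (hcomp : τ ∘ₗ TensorProduct.map (mul' K B) (mul' K A) =
      mulTau K A B τ ∘ₗ TensorProduct.map τ τ ∘ₗ midTau K A B τ)
    (b : B) (a p : A) :
    τ (b ⊗ₜ[K] (a * p)) = mulTau K A B τ (τ (b ⊗ₜ[K] a) ⊗ₜ[K] (p ⊗ₜ[K] (1 : B))) := by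
  have h := LinearMap.congr_fun hcomp ((b ⊗ₜ[K] (1 : B)) ⊗ₜ[K] (a ⊗ₜ[K] p))
  simp only [coe_comp, Function.comp_apply, map_tmul, mul'_apply, mul_one, midTau,
    LinearEquiv.coe_coe, assoc_tmul, assoc_symm_tmul, lTensor_tmul, rTensor_tmul, hu2] at h
  rw [h]

theorem lemX (τ : B ⊗[K] A →ₗ[K] A ⊗[K] B)
    (hu1 : ∀ b : B, τ (b ⊗ₜ[K] (1 : A)) = (1 : A) ⊗ₜ[K] b)
    (hcomp : τ ∘ₗ TensorProduct.map (mul' K B) (mul' K A) =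
      mulTau K A B τ ∘ₗ TensorProduct.map τ τ ∘ₗ midTau K A B τ)
    (d : B) (e : A) (x : A ⊗[K] B) :
    mulTau K A B τ ((TensorProduct.map LinearMap.id (mulRight K d) x) ⊗ₜ[K] (e ⊗ₜ[K] (1 : B))) =
      mulTau K A B τ (x ⊗ₜ[K] τ (d ⊗ₜ[K] e)) := by
  induction x using TensorProduct.induction_on with
  | zero => simp
  | tmul u v =>
    have h1 : (u ⊗ₜ[K] v : A ⊗[K] B) =
        TensorProduct.map (mulLeft K u) LinearMap.id ((1 : A) ⊗ₜ[K] v) := by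
      simp [mulLeft_apply]
    rw [map_tmul, mulTau_tmul_eq]
    simp only [id_coe, id_eq, mulRight_apply]
    rw [cor1 K A B τ hu1 hcomp, h1, mulTau_mapL, mulRight_one]
  | add x y hx hy => simp only [map_add, add_tmul, hx, hy]

theorem lemY (τ : B ⊗[K] A →ₗ[K] A ⊗[K] B)
    (hu2 : ∀ a : A, τ ((1 : B) ⊗ₜ[K] a) = a ⊗ₜ[K] (1 : B))
    (hcomp : τ ∘ₗ TensorProduct.map (mul' K B) (mul' K A) =
      mulTau K A B τ ∘ₗ TensorProduct.map τ τ ∘ₗ midTau K A B τ)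
    (b : B) (c : A) (z : A ⊗[K] B) :
    mulTau K A B τ (((1 : A) ⊗ₜ[K] b) ⊗ₜ[K] (TensorProduct.map (mulLeft K c) LinearMap.id z)) =
      mulTau K A B τ (τ (b ⊗ₜ[K] c) ⊗ₜ[K] z) := by
  induction z using TensorProduct.induction_on with
  | zero => simp
  | tmul p q =>
    have h1 : (p ⊗ₜ[K] q : A ⊗[K] B) =
        TensorProduct.map LinearMap.id (mulRight K q) (p ⊗ₜ[K] (1 : B)) := by
      simp [mulRight_apply]
    rw [map_tmul, mulTau_tmul_eq]
    simp only [id_coe, id_eq, mulLeft_apply, mulLeft_one]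
    rw [cor2 K A B τ hu2 hcomp, h1, mulTau_mapR]
  | add x y hx hy => simp only [map_add, tmul_add, hx, hy]

/-- If `τ` is a twisting map, then `μ_τ` is an associative multiplication on `A ⊗ B`
with unit `1 ⊗ 1`. -/
theorem mulTau_assoc (τ : B ⊗[K] A →ₗ[K] A ⊗[K] B)
    (hu1 : ∀ b : B, τ (b ⊗ₜ[K] (1 : A)) = (1 : A) ⊗ₜ[K] b)
    (hu2 : ∀ a : A, τ ((1 : B) ⊗ₜ[K] a) = a ⊗ₜ[K] (1 : B))
    (hcomp : τ ∘ₗ TensorProduct.map (mul' K B) (mul' K A) =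
      mulTau K A B τ ∘ₗ TensorProduct.map τ τ ∘ₗ midTau K A B τ) :
    (∀ x y z : A ⊗[K] B,
      mulTau K A B τ ((mulTau K A B τ (x ⊗ₜ[K] y)) ⊗ₜ[K] z) =
        mulTau K A B τ (x ⊗ₜ[K] (mulTau K A B τ (y ⊗ₜ[K] z)))) ∧
    (∀ x : A ⊗[K] B,
      mulTau K A B τ (((1 : A) ⊗ₜ[K] (1 : B)) ⊗ₜ[K] x) = x ∧
      mulTau K A B τ (x ⊗ₜ[K] ((1 : A) ⊗ₜ[K] (1 : B))) = x) := by
  constructor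
  · -- associativity
    have key : ∀ (a : A) (b : B) (c : A) (d : B) (e : A) (f : B),
        mulTau K A B τ ((mulTau K A B τ ((a ⊗ₜ[K] b) ⊗ₜ[K] (c ⊗ₜ[K] d))) ⊗ₜ[K] (e ⊗ₜ[K] f)) =
          mulTau K A B τ ((a ⊗ₜ[K] b) ⊗ₜ[K]
            (mulTau K A B τ ((c ⊗ₜ[K] d) ⊗ₜ[K] (e ⊗ₜ[K] f)))) := by
      intro a b c d e f
      rw [mulTau_tmul_eq, mulTau_tmul_eq]
      -- split maps: map (mulLeft a) (mulRight d) = map (mulLeft a) id ∘ map id (mulRight d)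
      have hsplit1 : TensorProduct.map (mulLeft K a) (mulRight K d) (τ (b ⊗ₜ[K] c)) =
          TensorProduct.map (mulLeft K a) LinearMap.id
            (TensorProduct.map LinearMap.id (mulRight K d) (τ (b ⊗ₜ[K] c))) := by
        rw [map_map_apply', comp_id, id_comp]
      have hsplit2 : TensorProduct.map (mulLeft K c) (mulRight K f) (τ (d ⊗ₜ[K] e)) =
          TensorProduct.map LinearMap.id (mulRight K f)
            (TensorProduct.map (mulLeft K c) LinearMap.id (τ (d ⊗ₜ[K] e))) := by
        rw [map_map_apply', comp_id, id_comp]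
      have hef : (e ⊗ₜ[K] f : A ⊗[K] B) =
          TensorProduct.map LinearMap.id (mulRight K f) (e ⊗ₜ[K] (1 : B)) := by
        simp [mulRight_apply]
      have hab : (a ⊗ₜ[K] b : A ⊗[K] B) =
          TensorProduct.map (mulLeft K a) LinearMap.id ((1 : A) ⊗ₜ[K] b) := by
        simp [mulLeft_apply]
      calc mulTau K A B τ
            ((TensorProduct.map (mulLeft K a) (mulRight K d) (τ (b ⊗ₜ[K] c))) ⊗ₜ[K]
              (e ⊗ₜ[K] f))
          = TensorProduct.map (mulLeft K a) LinearMap.id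
              (TensorProduct.map LinearMap.id (mulRight K f)
                (mulTau K A B τ
                  ((TensorProduct.map LinearMap.id (mulRight K d) (τ (b ⊗ₜ[K] c))) ⊗ₜ[K]
                    (e ⊗ₜ[K] (1 : B))))) := by
            rw [hsplit1, mulTau_mapL, hef, mulTau_mapR]
        _ = TensorProduct.map (mulLeft K a) LinearMap.id
              (TensorProduct.map LinearMap.id (mulRight K f)
                (mulTau K A B τ (τ (b ⊗ₜ[K] c) ⊗ₜ[K] τ (d ⊗ₜ[K] e)))) := by
            rw [lemX K A B τ hu1 hcomp]
        _ = mulTau K A B τ ((a ⊗ₜ[K] b) ⊗ₜ[K]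
              (TensorProduct.map (mulLeft K c) (mulRight K f) (τ (d ⊗ₜ[K] e)))) := by
            rw [hsplit2, hab, mulTau_mapL, mulTau_mapR,
              lemY K A B τ hu2 hcomp]
    intro x y z
    induction x using TensorProduct.induction_on with
    | zero => simp
    | tmul a b =>
      induction y using TensorProduct.induction_on with
      | zero => simp
      | tmul c d =>
        induction z using TensorProduct.induction_on with
        | zero => simp
        | tmul e f => exact key a b c d e f
        | add z1 z2 h1 h2 => simp only [tmul_add, map_add, h1, h2]
      | add y1 y2 h1 h2 => simp only [tmul_add, add_tmul, map_add, h1, h2]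
    | add x1 x2 h1 h2 => simp only [add_tmul, tmul_add, map_add, h1, h2]
  · -- unit
    intro x
    constructor
    · induction x using TensorProduct.induction_on with
      | zero => simp
      | tmul c d => simp [mulTau_tmul_eq, hu2, mulLeft_one, mulRight_apply]
      | add x y hx hy => simp only [tmul_add, map_add, hx, hy]
    · induction x using TensorProduct.induction_on with
      | zero => simp
      | tmul a b => simp [mulTau_tmul_eq, hu1, mulRight_one, mulLeft_apply]
      | add x y hx hy => simp only [add_tmul, map_add, hx, hy]

end
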